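/- Let n ≥ 1 be an integer, let β_n = (n + sqrt(n^2+4))/2 be the n-th metallic mean (the positive root of x^2 − n x − 1), and let M be the square matrix indexed by T_n × T_n whose (b,a) entry is the number of positions at which the tile b occurs in the pattern ω_n(a). Then β_n^2 is an eigenvalue of M, and every complex eigenvalue μ of M satisfies |μ| ≤ β_n^2; that is, β_n^2 is the Perron–Frobenius dominant eigenvalue of the incidence matrix of ω_n. -/

import Mathlib

structure WangTile (C : Type*) where
  right : C
  top : C
  left : C
  bottom : C
deriving DecidableEq

abbrev Lbl : Type := ℤ × ℤ × ℤ

def Vn (n : ℤ) : Set Lbl :=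
  {v | 0 ≤ v.1 ∧ v.1 ≤ v.2.1 ∧ v.2.1 ≤ 1 ∧ v.2.1 ≤ v.2.2 ∧ v.2.2 ≤ n + 1}

def hatT {C : Type*} (t : WangTile C) : WangTile C :=
  ⟨t.top, t.right, t.bottom, t.left⟩

def whiteTiles (n : ℤ) : Set (WangTile Lbl) :=
  {t | ∃ i j : ℤ, 1 ≤ i ∧ i ≤ n ∧ 1 ≤ j ∧ j ≤ n ∧
    t = ⟨(1, 1, i + 1), (1, 1, j + 1), (1, 1, i), (1, 1, j)⟩}

def blueH (n : ℤ) : Set (WangTile Lbl) :=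
  {t | ∃ i : ℤ, 0 ≤ i ∧ i ≤ n ∧ t = ⟨(0, 0, i + 1), (1, 1, 1), (0, 0, i), (1, 1, n)⟩}

def greenH (n : ℤ) : Set (WangTile Lbl) :=
  {t | ∃ i : ℤ, 0 ≤ i ∧ i ≤ n ∧ t = ⟨(0, 1, i + 1), (1, 1, 1), (0, 0, i), (1, 1, n + 1)⟩}

def yellowH (n : ℤ) : Set (WangTile Lbl) :=
  {t | ∃ i : ℤ, 1 ≤ i ∧ i ≤ n ∧ t = ⟨(0, 1, i + 1), (1, 1, 2), (0, 1, i), (1, 1, n + 1)⟩}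

def antiH (n : ℤ) : Set (WangTile Lbl) :=
  {t | ∃ i : ℤ, 1 ≤ i ∧ i ≤ n ∧ t = ⟨(0, 0, i + 1), (1, 1, 2), (0, 1, i), (1, 1, n)⟩}

def junctionTile (n k l r s : ℤ) : WangTile Lbl :=
  ⟨(0, k, l), (0, r, s), (0, s, r + n), (0, l, k + n)⟩

def jPairs : Set (ℤ × ℤ) := {(0, 0), (0, 1), (1, 1)}

def junctions (n : ℤ) : Set (WangTile Lbl) :=
  {t | ∃ k l r s : ℤ, (k, l) ∈ jPairs ∧ (r, s) ∈ jPairs ∧ t = junctionTile n k l r s}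

def Text (n : ℤ) : Set (WangTile Lbl) :=
  whiteTiles n ∪ blueH n ∪ greenH n ∪ yellowH n ∪ antiH n ∪
    hatT '' blueH n ∪ hatT '' greenH n ∪ hatT '' yellowH n ∪ hatT '' antiH n ∪ junctions n

def Dset (n : ℤ) : Set (WangTile Lbl) :=
  {(⟨(0, 0, n + 1), (1, 1, 1), (0, 0, n), (1, 1, n)⟩ : WangTile Lbl),
    hatT (⟨(0, 0, n + 1), (1, 1, 1), (0, 0, n), (1, 1, n)⟩ : WangTile Lbl),
    junctionTile n 0 0 1 1, junctionTile n 1 1 0 0}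

def Tmet (n : ℤ) : Set (WangTile Lbl) :=
  Text n \ (antiH n ∪ hatT '' antiH n ∪ Dset n)

def ValidConfig {C : Type*} (T : Set (WangTile C)) (x : ℤ × ℤ → WangTile C) : Prop :=
  (∀ m, x m ∈ T) ∧
    (∀ m : ℤ × ℤ, (x m).right = (x (m.1 + 1, m.2)).left) ∧
    (∀ m : ℤ × ℤ, (x m).top = (x (m.1, m.2 + 1)).bottom)

def ValidPattern {C : Type*} (T : Set (WangTile C)) (w h : ℕ) (p : ℕ → ℕ → WangTile C) : Prop :=
  (∀ i j, i < w → j < h → p i j ∈ T) ∧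
    (∀ i j, i + 1 < w → j < h → (p i j).right = (p (i + 1) j).left) ∧
    (∀ i j, i < w → j + 1 < h → (p i j).top = (p i (j + 1)).bottom)

def bottomWord {C : Type*} (w : ℕ) (p : ℕ → ℕ → WangTile C) : List C :=
  (List.range w).map fun i => (p i 0).bottom

def topWord {C : Type*} (w h : ℕ) (p : ℕ → ℕ → WangTile C) : List C :=
  (List.range w).map fun i => (p i (h - 1)).top

def leftWord {C : Type*} (h : ℕ) (p : ℕ → ℕ → WangTile C) : List C :=
  (List.range h).map fun j => (p 0 j).left

def rightWord {C : Type*} (w h : ℕ) (p : ℕ → ℕ → WangTile C) : List C :=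
  (List.range h).map fun j => (p (w - 1) j).right

def tau (n : ℤ) (v : Lbl) : List Lbl :=
  if v.1 = v.2.2 then
    (0, v.1 - v.2.1 + 1, n + 1) :: List.replicate (n - v.2.2).toNat (1, 1, n + 1)
  else
    (0, v.1 - v.2.1 + 1, n) ::
      (List.replicate (v.2.2 - v.1 - 1).toNat (1, 1, n) ++
        List.replicate (n + 1 - v.2.2).toNat (1, 1, n + 1))

/-- `q` (of size `w' × h'`) is the image under `ω_n` of the pattern `p` (of size `w × h`)
over the tile set `T`: there are block boundaries `A`, `B` such that each block of `q`
is the unique valid rectangular pattern over `T` whose boundary words are the images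
under `τ_n` of the labels of the corresponding tile of `p`. -/
def IsPatternImage (n : ℤ) (T : Set (WangTile Lbl)) (w h : ℕ)
    (p : ℕ → ℕ → WangTile Lbl) (w' h' : ℕ) (q : ℕ → ℕ → WangTile Lbl) : Prop :=
  ∃ A B : ℕ → ℕ, A 0 = 0 ∧ B 0 = 0 ∧ A w = w' ∧ B h = h' ∧
    (∀ k, k < w → A k < A (k + 1)) ∧ (∀ k, k < h → B k < B (k + 1)) ∧
    ∀ l1 l2, l1 < w → l2 < h →
      ValidPattern T (A (l1 + 1) - A l1) (B (l2 + 1) - B l2)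
        (fun i j => q (A l1 + i) (B l2 + j)) ∧
      rightWord (A (l1 + 1) - A l1) (B (l2 + 1) - B l2)
        (fun i j => q (A l1 + i) (B l2 + j)) = tau n (p l1 l2).right ∧
      topWord (A (l1 + 1) - A l1) (B (l2 + 1) - B l2)
        (fun i j => q (A l1 + i) (B l2 + j)) = tau n (p l1 l2).top ∧
      leftWord (B (l2 + 1) - B l2) (fun i j => q (A l1 + i) (B l2 + j)) =
        tau n (p l1 l2).left ∧
      bottomWord (A (l1 + 1) - A l1) (fun i j => q (A l1 + i) (B l2 + j)) =
        tau n (p l1 l2).bottom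

/-- `IterImage n T m a w h q` : `q` (of size `w × h`) is the pattern `ω_n^m(a)`. -/
def IterImage (n : ℤ) (T : Set (WangTile Lbl)) :
    ℕ → WangTile Lbl → ℕ → ℕ → (ℕ → ℕ → WangTile Lbl) → Prop
  | 0, a, w, h, q => w = 1 ∧ h = 1 ∧ q 0 0 = a
  | m + 1, a, w, h, q =>
      ∃ (w' h' : ℕ) (p : ℕ → ℕ → WangTile Lbl),
        IterImage n T m a w' h' p ∧ IsPatternImage n T w' h' p w h q

/-- The `n`-th metallic mean, the positive root of `x² - n·x - 1`. -/
noncomputable def betaMM (n : ℤ) : ℝ := ((n : ℝ) + Real.sqrt ((n : ℝ) ^ 2 + 4)) / 2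

/-!
Put `λ(v) = β_n - n + 1 = 1 + 1/β_n` on labels `v` with `v₀ = 0` and `λ(v) = 1` otherwise.
Then `τ_n` multiplies weights by `β_n`: `Σ λ(τ_n v) = β_n λ(v)`. Every tile has left and right
labels (and bottom and top labels) with the same first coordinate, so in a valid pattern the
weight `λ(left) λ(bottom)` of a tile only depends on its row and its column, and summing it over
`ω_n(a)` gives `(Σ λ(τ_n a.left)) (Σ λ(τ_n a.bottom)) = β_n² λ(a.left) λ(a.bottom)`. Hence
`u(a) = λ(a.left) λ(a.bottom)` is a positive left eigenvector of the nonnegative matrix `M`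
for `β_n²`, which makes `β_n²` an eigenvalue bounding the modulus of every eigenvalue
(pair the moduli of an eigenvector with `u`).
The patterns `ω_n(a)` are written down explicitly: a junction tile in the corner, a horizontal
strip along the bottom row, a vertical strip along the left column and white tiles elsewhere.
-/

open Finset Matrix

section PerronFrobenius

variable {ι : Type*} [Fintype ι]

theorem Matrix.exists_mulVec_eq_smul_of_vecMul_eq_smul {K : Type*} [Field K] (M : Matrix ι ι K)
    {u : ι → K} {r : K} (hu : u ≠ 0) (h : u ᵥ* M = r • u) : ∃ v ≠ 0, M *ᵥ v = r • v := by
  classical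
  have hdet : (M - r • 1).det = 0 :=
    exists_vecMul_eq_zero_iff.1 ⟨u, hu, by rw [vecMul_sub, h, vecMul_smul, vecMul_one, sub_self]⟩
  obtain ⟨v, hv, hMv⟩ := exists_mulVec_eq_zero_iff.2 hdet
  exact ⟨v, hv, by rwa [sub_mulVec, smul_mulVec, one_mulVec, sub_eq_zero] at hMv⟩

theorem Matrix.norm_le_of_vecMul_eq_smul (M : Matrix ι ι ℝ) (hM : ∀ i j, 0 ≤ M i j)
    {u : ι → ℝ} (hu : ∀ i, 0 < u i) {r : ℝ} (h : u ᵥ* M = r • u)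
    {μ : ℂ} {v : ι → ℂ} (hv : v ≠ 0) (hμ : M.map (↑) *ᵥ v = μ • v) : ‖μ‖ ≤ r := by
  have hrow : ∀ i, ‖μ‖ * ‖v i‖ ≤ ∑ j, M i j * ‖v j‖ := fun i => by
    have hi : μ * v i = ∑ j, (M i j : ℂ) * v j := by
      simpa [mulVec, dotProduct] using (congrFun hμ i).symm
    calc ‖μ‖ * ‖v i‖ = ‖∑ j, (M i j : ℂ) * v j‖ := by rw [← hi, norm_mul]
      _ ≤ ∑ j, ‖(M i j : ℂ) * v j‖ := norm_sum_le _ _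
      _ = ∑ j, M i j * ‖v j‖ := by
        simp only [norm_mul, Complex.norm_real, Real.norm_of_nonneg (hM i _)]
  obtain ⟨k, hk⟩ := Function.ne_iff.1 hv
  have hW : 0 < ∑ i, u i * ‖v i‖ :=
    sum_pos' (fun i _ => by have := hu i; positivity)
      ⟨k, mem_univ k, mul_pos (hu k) (norm_pos_iff.2 hk)⟩
  refine le_of_mul_le_mul_right ?_ hW
  calc ‖μ‖ * ∑ i, u i * ‖v i‖ = ∑ i, u i * (‖μ‖ * ‖v i‖) := by
        rw [mul_sum]; exact sum_congr rfl fun i _ => by ring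
    _ ≤ ∑ i, u i * ∑ j, M i j * ‖v j‖ :=
        sum_le_sum fun i _ => mul_le_mul_of_nonneg_left (hrow i) (hu i).le
    _ = ∑ j, (u ᵥ* M) j * ‖v j‖ := by
        simp only [vecMul, dotProduct, mul_sum, sum_mul]
        rw [sum_comm]; simp only [mul_assoc]
    _ = r * ∑ i, u i * ‖v i‖ := by
        rw [h, mul_sum]; simp only [Pi.smul_apply, smul_eq_mul, mul_assoc]

end PerronFrobenius

theorem Finset.sum_mul_card_filter_eq_sum {ι α β R : Type*} [Fintype ι] [DecidableEq α]
    [CommSemiring R] {e : ι → α} (he : Function.Injective e) {s : Finset β} {φ : β → α}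
    (hφ : ∀ x ∈ s, φ x ∈ Set.range e) (g : α → R) :
    ∑ b, g (e b) * #{x ∈ s | φ x = e b} = ∑ x ∈ s, g (φ x) := by
  classical
  calc ∑ b, g (e b) * #{x ∈ s | φ x = e b}
      = ∑ y ∈ univ.image e, ∑ x ∈ s with φ x = y, g y := by
        rw [sum_image fun a _ b _ hab => he hab]
        simp [sum_const, mul_comm]
    _ = ∑ x ∈ s, g (φ x) := sum_fiberwise_of_maps_to' (fun x hx => by
        obtain ⟨b, hb⟩ := hφ x hx; exact mem_image.2 ⟨b, mem_univ b, hb⟩) g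

theorem List.sum_map_range {M : Type*} [AddCommMonoid M] (m : ℕ) (g : ℕ → M) :
    ((List.range m).map g).sum = ∑ i ∈ Finset.range m, g i := by
  rw [Finset.sum, range_val, Multiset.range, Multiset.map_coe, Multiset.sum_coe]

theorem ValidPattern.mono {C : Type*} {T T' : Set (WangTile C)} (hT : T ⊆ T') {w h : ℕ}
    {p : ℕ → ℕ → WangTile C} (hp : ValidPattern T w h p) : ValidPattern T' w h p :=
  ⟨fun i j hi hj => hT (hp.1 i j hi hj), hp.2⟩

theorem ValidPattern.sum_mul_weight {C : Type*} {T : Set (WangTile C)} {w h : ℕ}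
    {p : ℕ → ℕ → WangTile C} (hp : ValidPattern T w h p) (f : C → ℝ)
    (hf : ∀ t ∈ T, f t.left = f t.right ∧ f t.bottom = f t.top) :
    ∑ ij ∈ range w ×ˢ range h, f (p ij.1 ij.2).bottom * f (p ij.1 ij.2).left =
      ((bottomWord w p).map f).sum * ((leftWord h p).map f).sum := by
  have hcol : ∀ i < w, ∀ j < h, f (p i j).bottom = f (p i 0).bottom := by
    intro i hi j
    induction j with
    | zero => intro _; rfl
    | succ j ih =>
      intro hj
      rw [← hp.2.2 i j hi hj, ← (hf _ (hp.1 i j hi (by omega))).2, ih (by omega)]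
  have hrow : ∀ j < h, ∀ i < w, f (p i j).left = f (p 0 j).left := by
    intro j hj i
    induction i with
    | zero => intro _; rfl
    | succ i ih =>
      intro hi
      rw [← hp.2.1 i j hi hj, ← (hf _ (hp.1 i j (by omega) hj)).1, ih (by omega)]
  rw [bottomWord, leftWord, List.map_map, List.map_map, List.sum_map_range, List.sum_map_range,
    sum_mul_sum, sum_product]
  refine sum_congr rfl fun i hi => sum_congr rfl fun j hj => ?_
  rw [mem_range] at hi hj
  simp only [Function.comp_apply, hcol i hi j hj, hrow j hj i hi]

theorem betaMM_sq (n : ℤ) : betaMM n ^ 2 = n * betaMM n + 1 := by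
  have hs := Real.sq_sqrt (by positivity : (0 : ℝ) ≤ (n : ℝ) ^ 2 + 4)
  unfold betaMM
  linear_combination hs / 4

theorem le_betaMM (n : ℤ) : (n : ℝ) ≤ betaMM n := by
  have : (n : ℝ) ≤ Real.sqrt ((n : ℝ) ^ 2 + 4) :=
    (le_abs_self _).trans (Real.abs_le_sqrt (by linarith))
  unfold betaMM
  linarith

noncomputable def labelWeight (n : ℤ) (v : Lbl) : ℝ := if v.1 = 0 then betaMM n - n + 1 else 1

theorem labelWeight_pos (n : ℤ) (v : Lbl) : 0 < labelWeight n v := by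
  unfold labelWeight
  split_ifs
  · linarith [le_betaMM n]
  · exact one_pos

theorem Int.natCast_toNat_of_nonneg {R : Type*} [AddGroupWithOne R] {a : ℤ} (h : 0 ≤ a) :
    ((a.toNat : ℕ) : R) = a := by
  rw [← Int.cast_natCast, Int.toNat_of_nonneg h]

theorem sum_map_labelWeight_tau {n : ℤ} (hn : 1 ≤ n) {v : Lbl} (hv : v ∈ Vn n) :
    ((tau n v).map (labelWeight n)).sum = betaMM n * labelWeight n v := by
  obtain ⟨x, y, z⟩ := v
  simp only [Vn, Set.mem_ofPred_eq] at hv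
  have hβ := betaMM_sq n
  unfold tau
  split_ifs with hxz <;>
    simp only [List.map_cons, List.map_append, List.map_replicate, List.sum_cons,
      List.sum_append, List.sum_replicate, nsmul_eq_mul, labelWeight, one_ne_zero,
      ↓reduceIte, mul_one] at hxz ⊢ <;>
    simp (disch := omega) only [Int.natCast_toNat_of_nonneg] <;>
    rcases (by omega : x = 0 ∨ x = 1) with rfl | rfl <;> (try subst hxz) <;> norm_num <;>
    linarith [hβ]

noncomputable def tileWeight (n : ℤ) (t : WangTile Lbl) : ℝ :=
  labelWeight n t.bottom * labelWeight n t.left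

theorem tileWeight_pos (n : ℤ) (t : WangTile Lbl) : 0 < tileWeight n t :=
  mul_pos (labelWeight_pos n _) (labelWeight_pos n _)

theorem fst_left_eq_fst_right_of_mem_Text {n : ℤ} {t : WangTile Lbl} (ht : t ∈ Text n) :
    t.left.1 = t.right.1 ∧ t.bottom.1 = t.top.1 := by
  rcases ht with ((((((((⟨i, j, _, _, _, _, rfl⟩ | ⟨i, _, _, rfl⟩) | ⟨i, _, _, rfl⟩) |
    ⟨i, _, _, rfl⟩) | ⟨i, _, _, rfl⟩) | ⟨_, ⟨i, _, _, rfl⟩, rfl⟩) | ⟨_, ⟨i, _, _, rfl⟩, rfl⟩) |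
    ⟨_, ⟨i, _, _, rfl⟩, rfl⟩) | ⟨_, ⟨i, _, _, rfl⟩, rfl⟩) | ⟨k, l, r, s, -, -, rfl⟩ <;>
    exact ⟨rfl, rfl⟩

theorem sum_tileWeight_eq {n : ℤ} (hn : 1 ≤ n) {a : WangTile Lbl} (hb : a.bottom ∈ Vn n)
    (hl : a.left ∈ Vn n) {w h : ℕ} {q : ℕ → ℕ → WangTile Lbl} (hq : ValidPattern (Text n) w h q)
    (hqb : bottomWord w q = tau n a.bottom) (hql : leftWord h q = tau n a.left) :
    ∑ ij ∈ range w ×ˢ range h, tileWeight n (q ij.1 ij.2) = betaMM n ^ 2 * tileWeight n a := by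
  have hf : ∀ t ∈ Text n, labelWeight n t.left = labelWeight n t.right ∧
      labelWeight n t.bottom = labelWeight n t.top := fun t ht => by
    obtain ⟨h₁, h₂⟩ := fst_left_eq_fst_right_of_mem_Text ht
    simp only [labelWeight, h₁, h₂, and_self]
  simp only [tileWeight]
  rw [hq.sum_mul_weight _ hf, hqb, hql, sum_map_labelWeight_tau hn hb,
    sum_map_labelWeight_tau hn hl]
  ring

theorem tau_length {n : ℤ} (hn : 1 ≤ n) {v : Lbl} (hv : v ∈ Vn n) :
    (tau n v).length = (n + 1 - v.1).toNat := by
  simp only [Vn, Set.mem_ofPred_eq] at hv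
  unfold tau
  split_ifs <;> simp <;> omega

theorem tau_getElem {n : ℤ} {v : Lbl} {k : ℕ} (hk : k < (tau n v).length) :
    (tau n v)[k] =
      if k = 0 then ((0 : ℤ), v.1 - v.2.1 + 1, if v.1 = v.2.2 then n + 1 else n)
      else if (k : ℤ) ≤ v.2.2 - v.1 - 1 then ((1 : ℤ), (1 : ℤ), n)
      else ((1 : ℤ), (1 : ℤ), n + 1) := by
  rcases k with _ | m
  · unfold tau; split_ifs <;> rfl
  · rw [if_neg m.succ_ne_zero]
    unfold tau at hk ⊢
    split_ifs at hk ⊢ with h <;>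
      simp only [List.getElem_cons_succ, List.length_cons, List.length_append,
        List.length_replicate] at hk ⊢
    · rw [List.getElem_replicate, if_neg (show ¬((m + 1 : ℕ) : ℤ) ≤ v.2.2 - v.1 - 1 by omega)]
    · simp only [List.getElem_append, List.getElem_replicate, List.length_replicate]
      split_ifs <;> first | rfl | omega

def blueTile (n i : ℤ) : WangTile Lbl := ⟨(0, 0, i + 1), (1, 1, 1), (0, 0, i), (1, 1, n)⟩
def greenTile (n i : ℤ) : WangTile Lbl := ⟨(0, 1, i + 1), (1, 1, 1), (0, 0, i), (1, 1, n + 1)⟩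
def yellowTile (n i : ℤ) : WangTile Lbl := ⟨(0, 1, i + 1), (1, 1, 2), (0, 1, i), (1, 1, n + 1)⟩
def whiteTile (i j : ℤ) : WangTile Lbl := ⟨(1, 1, i + 1), (1, 1, j + 1), (1, 1, i), (1, 1, j)⟩

/-- Tile number `i ≥ 1` of the horizontal strip of `ω_n` whose bottom word is `τ_n v`. -/
def edgeTile (n : ℤ) (v : Lbl) (i : ℕ) : WangTile Lbl :=
  if (i : ℤ) ≤ v.2.2 - v.1 - 1 then blueTile n (v.1 - v.2.1 + i)
  else if (i : ℤ) = v.2.2 - v.1 then greenTile n (v.2.2 - v.2.1)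
  else yellowTile n (v.1 - v.2.1 + i)

/-- `superTile n b l` is the pattern `ω_n(a)` of the tile `a` with bottom label `b` and left
label `l`. -/
def superTile (n : ℤ) (b l : Lbl) (i j : ℕ) : WangTile Lbl :=
  if i = 0 then
    if j = 0 then
      junctionTile n (if b.1 = b.2.2 then 1 else 0) (b.1 - b.2.1 + 1)
        (if l.1 = l.2.2 then 1 else 0) (l.1 - l.2.1 + 1)
    else hatT (edgeTile n l j)
  else if j = 0 then edgeTile n b i
  else whiteTile ((if (j : ℤ) ≤ l.2.2 - l.1 then 1 else 2) + i - 1)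
    ((if (i : ℤ) ≤ b.2.2 - b.1 then 1 else 2) + j - 1)

/-- Half of the conditions under which `superTile n b l` is a valid pattern over `T_n`; the
other half is `Fits n l b`, so that transposing the pattern swaps the two halves. -/
def Fits (n : ℤ) (b l : Lbl) : Prop :=
  b ∈ Vn n ∧ b.2.2 ≤ n + b.2.1 ∧ (b.2.2 ≤ n - 1 → l.1 = 1) ∧ (l.1 = l.2.2 → b.2.1 = b.1) ∧
    (l.1 = 1 → b.2.2 ≤ n)

set_option maxHeartbeats 400000 in
theorem superTile_mem {n : ℤ} (hn : 1 ≤ n) {b l : Lbl} (hb : Fits n b l) (hl : Fits n l b)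
    {i j : ℕ} (hi : i < (n + 1 - b.1).toNat) (hj : j < (n + 1 - l.1).toNat) :
    superTile n b l i j ∈ Tmet n := by
  obtain ⟨xb, yb, zb⟩ := b
  obtain ⟨xl, yl, zl⟩ := l
  simp only [Fits, Vn, Set.mem_ofPred_eq] at hb hl
  replace hi : (i : ℤ) < n + 1 - xb := by omega
  replace hj : (j : ℤ) < n + 1 - xl := by omega
  unfold superTile edgeTile
  dsimp only
  split_ifs <;>
    simp [Tmet, Text, whiteTiles, blueH, greenH, yellowH, antiH, junctions, Dset, hatT,
      junctionTile, jPairs, blueTile, greenTile, yellowTile, whiteTile] <;> omega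

theorem superTile_transpose (n : ℤ) (b l : Lbl) (i j : ℕ) :
    superTile n l b j i = hatT (superTile n b l i j) := by
  unfold superTile
  split_ifs <;> rfl

theorem superTile_right_eq_left {n : ℤ} {b l : Lbl} (hb : Fits n b l) (hl : Fits n l b)
    {i j : ℕ} (hi : i + 1 < (n + 1 - b.1).toNat) (hj : j < (n + 1 - l.1).toNat) :
    (superTile n b l i j).right = (superTile n b l (i + 1) j).left := by
  obtain ⟨xb, yb, zb⟩ := b
  obtain ⟨xl, yl, zl⟩ := l
  simp only [Fits, Vn, Set.mem_ofPred_eq] at hb hl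
  replace hi : (i : ℤ) + 1 < n + 1 - xb := by omega
  replace hj : (j : ℤ) < n + 1 - xl := by omega
  simp only [superTile, edgeTile, Nat.add_one_ne_zero, ↓reduceIte]
  split_ifs <;>
    simp only [blueTile, greenTile, yellowTile, whiteTile, junctionTile, hatT, Prod.mk.injEq,
      true_and] <;> omega

theorem bottomWord_superTile {n : ℤ} (hn : 1 ≤ n) {b l : Lbl} (hb : Fits n b l) (hl : Fits n l b) :
    bottomWord (n + 1 - b.1).toNat (superTile n b l) = tau n b := by
  have hbV := hb.1
  refine List.ext_getElem (by simp [bottomWord, tau_length hn hbV]) fun k hk _ => ?_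
  rw [tau_getElem]
  simp only [bottomWord, List.getElem_map, List.getElem_range]
  obtain ⟨xb, yb, zb⟩ := b
  obtain ⟨xl, yl, zl⟩ := l
  simp only [Fits, Vn, Set.mem_ofPred_eq, bottomWord, List.length_map, List.length_range]
    at hb hl hk
  replace hk : (k : ℤ) < n + 1 - xb := by omega
  unfold superTile edgeTile
  dsimp only
  split_ifs <;>
    simp only [blueTile, greenTile, yellowTile, whiteTile, junctionTile, hatT, Prod.mk.injEq,
      true_and] <;> omega

/-- A tile of `T_n` is determined by its bottom label `b` and left label `l`: its top label is
`topLabel n b l` and its right label is `topLabel n l b`. -/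
def topLabel (n : ℤ) (b l : Lbl) : Lbl :=
  (b.1, b.1 + if l.2.2 = n + 1 then 1 else 0, if l.1 = 1 then b.2.2 + 1 else b.1 + l.2.1)

theorem topLabel_mem_Vn {n : ℤ} {b l : Lbl} (hb : Fits n b l) (hl : Fits n l b) :
    topLabel n b l ∈ Vn n := by
  obtain ⟨xb, yb, zb⟩ := b
  obtain ⟨xl, yl, zl⟩ := l
  simp only [Fits, Vn, Set.mem_ofPred_eq] at hb hl
  simp only [topLabel, Vn, Set.mem_ofPred_eq]
  split_ifs <;> omega

theorem topWord_superTile {n : ℤ} (hn : 1 ≤ n) {b l : Lbl} (hb : Fits n b l) (hl : Fits n l b) :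
    topWord (n + 1 - b.1).toNat (n + 1 - l.1).toNat (superTile n b l) = tau n (topLabel n b l) := by
  have htV := topLabel_mem_Vn hb hl
  refine List.ext_getElem ?_ fun k hk _ => ?_
  · rw [tau_length hn htV]
    simp only [topWord, List.length_map, List.length_range, topLabel]
  rw [tau_getElem]
  simp only [topWord, List.getElem_map, List.getElem_range]
  obtain ⟨xb, yb, zb⟩ := b
  obtain ⟨xl, yl, zl⟩ := l
  simp only [Fits, Vn, Set.mem_ofPred_eq, topWord, List.length_map, List.length_range] at hb hl hk
  replace hk : (k : ℤ) < n + 1 - xb := by omega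
  have htop : (((n + 1 - xl).toNat - 1 : ℕ) : ℤ) = n - xl := by omega
  generalize (n + 1 - xl).toNat - 1 = j at htop
  simp only [superTile, edgeTile, topLabel]
  split_ifs <;>
    simp only [blueTile, greenTile, yellowTile, whiteTile, junctionTile, hatT, Prod.mk.injEq,
      true_and] <;> omega

theorem leftWord_superTile {n : ℤ} (hn : 1 ≤ n) {b l : Lbl} (hb : Fits n b l) (hl : Fits n l b) :
    leftWord (n + 1 - l.1).toNat (superTile n b l) = tau n l := by
  rw [← bottomWord_superTile hn hl hb]
  simp only [leftWord, bottomWord, superTile_transpose n b l]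
  rfl

theorem rightWord_superTile {n : ℤ} (hn : 1 ≤ n) {b l : Lbl} (hb : Fits n b l) (hl : Fits n l b) :
    rightWord (n + 1 - b.1).toNat (n + 1 - l.1).toNat (superTile n b l) =
      tau n (topLabel n l b) := by
  rw [← topWord_superTile hn hl hb]
  simp only [rightWord, topWord, superTile_transpose n b l]
  rfl

theorem superTile_top_eq_bottom {n : ℤ} {b l : Lbl} (hb : Fits n b l) (hl : Fits n l b)
    {i j : ℕ} (hi : i < (n + 1 - b.1).toNat) (hj : j + 1 < (n + 1 - l.1).toNat) :
    (superTile n b l i j).top = (superTile n b l i (j + 1)).bottom := by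
  simpa only [superTile_transpose n b l, hatT] using superTile_right_eq_left hl hb hj hi

theorem validPattern_superTile {n : ℤ} (hn : 1 ≤ n) {b l : Lbl} (hb : Fits n b l)
    (hl : Fits n l b) :
    ValidPattern (Tmet n) (n + 1 - b.1).toNat (n + 1 - l.1).toNat (superTile n b l) :=
  ⟨fun _ _ => superTile_mem hn hb hl, fun _ _ => superTile_right_eq_left hb hl,
    fun _ _ => superTile_top_eq_bottom hb hl⟩

theorem fits_of_mem_Tmet {n : ℤ} (hn : 1 ≤ n) {a : WangTile Lbl} (ha : a ∈ Tmet n) :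
    Fits n a.bottom a.left ∧ Fits n a.left a.bottom ∧ a.top = topLabel n a.bottom a.left ∧
      a.right = topLabel n a.left a.bottom := by
  obtain ⟨ha, hnot⟩ := ha
  have hA : a ∉ antiH n ∪ hatT '' antiH n := fun h => hnot (Or.inl h)
  rcases ha with ((((((((⟨i, j, _, _, _, _, rfl⟩ | ⟨i, _, _, rfl⟩) | ⟨i, _, _, rfl⟩) |
    ⟨i, _, _, rfl⟩) | ⟨i, _, _, rfl⟩) | ⟨_, ⟨i, _, _, rfl⟩, rfl⟩) | ⟨_, ⟨i, _, _, rfl⟩, rfl⟩) |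
    ⟨_, ⟨i, _, _, rfl⟩, rfl⟩) | ⟨_, ⟨i, _, _, rfl⟩, rfl⟩) | ⟨k, l, r, s, hkl, hrs, rfl⟩ <;>
    simp [antiH, hatT, junctionTile] at hA <;>
    simp only [Fits, Vn, topLabel, hatT, junctionTile, jPairs, Set.mem_ofPred_eq, Prod.mk.injEq,
      Set.mem_insert_iff, Set.mem_singleton_iff, true_and, implies_true,
      true_implies] at * <;> split_ifs <;> omega

theorem exists_validPattern_of_mem_Tmet {n : ℤ} (hn : 1 ≤ n) {a : WangTile Lbl} (ha : a ∈ Tmet n) :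
    ∃ w h q, ValidPattern (Tmet n) w h q ∧
      rightWord w h q = tau n a.right ∧ topWord w h q = tau n a.top ∧
      leftWord h q = tau n a.left ∧ bottomWord w q = tau n a.bottom := by
  obtain ⟨hb, hl, htop, hright⟩ := fits_of_mem_Tmet hn ha
  exact ⟨_, _, superTile n a.bottom a.left, validPattern_superTile hn hb hl,
    hright ▸ rightWord_superTile hn hb hl, htop ▸ topWord_superTile hn hb hl,
    leftWord_superTile hn hb hl, bottomWord_superTile hn hb hl⟩

theorem junctionTile_zero_mem_Tmet (n : ℤ) : junctionTile n 0 0 0 0 ∈ Tmet n := by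
  simp [Tmet, Text, whiteTiles, blueH, greenH, yellowH, antiH, junctions, Dset, hatT,
    junctionTile, jPairs]

theorem stmt18_general (n : ℤ) (hn : 1 ≤ n)
    (ι : Type) [Fintype ι]
    (e : ι → WangTile Lbl) (he : Function.Injective e) (hrange : Set.range e = Tmet n)
    (M : Matrix ι ι ℝ)
    (hM : ∀ (a : ι) (w h : ℕ) (q : ℕ → ℕ → WangTile Lbl),
      ValidPattern (Text n) w h q →
      rightWord w h q = tau n (e a).right → topWord w h q = tau n (e a).top →
      leftWord h q = tau n (e a).left → bottomWord w q = tau n (e a).bottom →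
      ∀ b : ι, M b a =
        (((Finset.range w ×ˢ Finset.range h).filter
          fun ij => q ij.1 ij.2 = e b).card : ℝ)) :
    (∃ vv : ι → ℝ, vv ≠ 0 ∧ M.mulVec vv = (betaMM n) ^ 2 • vv) ∧
    (∀ μ : ℂ, (∃ vv : ι → ℂ, vv ≠ 0 ∧
        (M.map fun r : ℝ => (r : ℂ)).mulVec vv = μ • vv) →
      ‖μ‖ ≤ (betaMM n) ^ 2) := by
  set u : ι → ℝ := fun b => tileWeight n (e b)
  have hcol : ∀ a, (∀ b, 0 ≤ M b a) ∧ (u ᵥ* M) a = betaMM n ^ 2 * u a := by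
    intro a
    have ha : e a ∈ Tmet n := hrange ▸ ⟨a, rfl⟩
    obtain ⟨hb, hl, -, -⟩ := fits_of_mem_Tmet hn ha
    obtain ⟨w, h, q, hq, hqr, hqt, hql, hqb⟩ := exists_validPattern_of_mem_Tmet hn ha
    have hqText : ValidPattern (Text n) w h q := hq.mono fun _ ht => ht.1
    have hMa := hM a w h q hqText hqr hqt hql hqb
    refine ⟨fun b => hMa b ▸ Nat.cast_nonneg _, ?_⟩
    have hqe : ∀ ij ∈ range w ×ˢ range h, q ij.1 ij.2 ∈ Set.range e := fun ij hij => by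
      rw [mem_product, mem_range, mem_range] at hij
      exact hrange ▸ hq.1 _ _ hij.1 hij.2
    simp only [vecMul, dotProduct, hMa]
    rw [sum_mul_card_filter_eq_sum he hqe (tileWeight n),
      sum_tileWeight_eq hn hb.1 hl.1 hqText hqb hql]
  have hu : ∀ b, 0 < u b := fun b => tileWeight_pos n (e b)
  have hvec : u ᵥ* M = betaMM n ^ 2 • u := funext fun a => (hcol a).2
  obtain ⟨b₀, -⟩ : junctionTile n 0 0 0 0 ∈ Set.range e :=
    hrange ▸ junctionTile_zero_mem_Tmet n
  exact ⟨M.exists_mulVec_eq_smul_of_vecMul_eq_smul (fun h0 => (hu b₀).ne' (congrFun h0 b₀)) hvec,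
    fun μ ⟨v, hv, hμ⟩ => M.norm_le_of_vecMul_eq_smul (fun b a => (hcol a).1 b) hu hvec hv hμ⟩

/-- `β_n²` is the Perron–Frobenius dominant eigenvalue of the incidence
matrix of `ω_n`. -/
theorem stmt18 (n : ℤ) (hn : 1 ≤ n)
    (ι : Type) [Fintype ι] [DecidableEq ι]
    (e : ι → WangTile Lbl) (he : Function.Injective e) (hrange : Set.range e = Tmet n)
    (M : Matrix ι ι ℝ)
    (hM : ∀ (a : ι) (w h : ℕ) (q : ℕ → ℕ → WangTile Lbl),
      ValidPattern (Text n) w h q →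
      rightWord w h q = tau n (e a).right → topWord w h q = tau n (e a).top →
      leftWord h q = tau n (e a).left → bottomWord w q = tau n (e a).bottom →
      ∀ b : ι, M b a =
        (((Finset.range w ×ˢ Finset.range h).filter
          fun ij => q ij.1 ij.2 = e b).card : ℝ)) :
    (∃ vv : ι → ℝ, vv ≠ 0 ∧ M.mulVec vv = (betaMM n) ^ 2 • vv) ∧
    (∀ μ : ℂ, (∃ vv : ι → ℂ, vv ≠ 0 ∧
        (M.map fun r : ℝ => (r : ℂ)).mulVec vv = μ • vv) →
      ‖μ‖ ≤ (betaMM n) ^ 2) :=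
  stmt18_general n hn ι e he hrange M hM
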